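/- For every fixed complex number x, lim_{n→∞} (−1)^n·q^{n/2}·P̃_n(x;p,q) = c(x), where c(x) = q^{−1/4}·((1−q)/(1−p))·√((p;q)_∞/(q;q)_∞)·∑_{k=0}^∞ (q^{k²+k/2}/((pq;q)_k·(q;q)_k))·(−q·x)^k. -/

import Mathlib

/-- Finite q-shifted factorial `(z;q)_n`. -/
noncomputable def qp (z q : ℝ) (n : ℕ) : ℝ := ∏ k ∈ Finset.range n, (1 - z * q ^ k)

/-- Infinite q-shifted factorial `(z;q)_∞`. -/
noncomputable def qpInf (z q : ℝ) : ℝ := ∏' k : ℕ, (1 - z * q ^ k)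

/-- Gaussian q-binomial coefficient. -/
noncomputable def qbinom (q : ℝ) (n k : ℕ) : ℝ := qp q q n / (qp q q k * qp q q (n - k))

/-- `Δ_n = (pq^n;q)_∞ − (q^n;q)_∞`. -/
noncomputable def Δ (p q : ℝ) (n : ℕ) : ℝ := qpInf (p * q ^ n) q - qpInf (q ^ n) q

/-- The normalizing constant `C̃_n`. -/
noncomputable def Ct (p q : ℝ) (n : ℕ) : ℝ :=
  (-1) ^ n * q ^ ((n : ℝ) / 2 + 1 / 4) * Real.sqrt (qp p q (n + 1) / qp q q n) *
    qpInf (p * q ^ (n + 1)) q / Real.sqrt (Δ p q n * Δ p q (n + 1))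

/-- Coefficients `b̃_{k,n}` of the modified generalized Stieltjes–Wigert
orthonormal polynomials. -/
noncomputable def bt (p q : ℝ) (k n : ℕ) : ℝ :=
  Ct p q n * (-1) ^ k * qbinom q n k * (q ^ ((k : ℝ) ^ 2 + (k : ℝ) / 2) / qp p q k) *
    (1 - (1 - q ^ k) / (1 - p * q ^ k) * (qpInf (q ^ (n + 1)) q / qpInf (p * q ^ (n + 1)) q))

/-- The modified generalized Stieltjes–Wigert orthonormal polynomial
`P̃_n(x;p,q) = ∑_{k=0}^n b̃_{k,n} x^k`, for complex `x`. -/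
noncomputable def Pt (p q : ℝ) (n : ℕ) (x : ℂ) : ℂ :=
  ∑ k ∈ Finset.range (n + 1), ((bt p q k n : ℝ) : ℂ) * x ^ k

/-!
After the factor `(-1)^n q^{n/2}`, the polynomial splits as the scalar `(-1)^n q^{n/2} C̃_n`
times `∑_{k ≤ n} (b̃_{k,n} / C̃_n) x^k`. The scalar converges because
`(z;q)_∞ = 1 - z/(1-q) + O(z²)` gives `Δ_n ∼ q^n (1-p)/(1-q)`. For fixed `k` the ratio
`b̃_{k,n} / C̃_n` converges as well (the q-binomial tends to `1/(q;q)_k` and the quotient of tails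
to `1`), and it is bounded uniformly in `n` by `q^{k²+k/2} / ((q;q)_∞² (p;q)_∞)`, which is
summable against `|x|^k`; Tannery's theorem then passes to the limit under the sum.
-/

open Filter Topology Finset

namespace QPochhammer

variable {z q : ℝ}

lemma qp_succ (n : ℕ) : qp z q (n + 1) = qp z q n * (1 - z * q ^ n) :=
  prod_range_succ _ _

lemma qp_succ' (n : ℕ) : qp z q (n + 1) = (1 - z) * qp (z * q) q n := by
  simp only [qp, prod_range_succ', pow_succ', pow_zero, mul_one, mul_assoc, mul_comm]

lemma mul_pow_le_one (hz1 : z ≤ 1) (hq0 : 0 ≤ q) (hq1 : q ≤ 1) (k : ℕ) : z * q ^ k ≤ 1 :=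
  mul_le_one₀ hz1 (pow_nonneg hq0 k) (pow_le_one₀ hq0 hq1)

lemma one_sub_mul_pow_pos (hz0 : 0 ≤ z) (hz1 : z < 1) (hq0 : 0 ≤ q) (hq1 : q ≤ 1) (k : ℕ) :
    0 < 1 - z * q ^ k :=
  sub_pos.2 (mul_lt_one_of_nonneg_of_lt_one_left hz0 hz1 (pow_le_one₀ hq0 hq1))

lemma qp_pos (hz0 : 0 ≤ z) (hz1 : z < 1) (hq0 : 0 ≤ q) (hq1 : q ≤ 1) (n : ℕ) :
    0 < qp z q n :=
  prod_pos fun k _ => one_sub_mul_pow_pos hz0 hz1 hq0 hq1 k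

lemma qp_le_one (hz0 : 0 ≤ z) (hz1 : z ≤ 1) (hq0 : 0 ≤ q) (hq1 : q ≤ 1) (n : ℕ) :
    qp z q n ≤ 1 :=
  prod_le_one (fun k _ => sub_nonneg.2 (mul_pow_le_one hz1 hq0 hq1 k))
    fun k _ => sub_le_self _ (mul_nonneg hz0 (pow_nonneg hq0 k))

lemma qp_antitone (hz0 : 0 ≤ z) (hz1 : z < 1) (hq0 : 0 ≤ q) (hq1 : q ≤ 1) :
    Antitone (qp z q) :=
  antitone_nat_of_succ_le fun n => by
    rw [qp_succ]
    exact mul_le_of_le_one_right (qp_pos hz0 hz1 hq0 hq1 n).le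
      (sub_le_self _ (mul_nonneg hz0 (pow_nonneg hq0 n)))

lemma summable_mul_pow (hq0 : 0 ≤ q) (hq1 : q < 1) : Summable fun k : ℕ => z * q ^ k :=
  (summable_geometric_of_lt_one hq0 hq1).mul_left z

lemma multipliable (hq0 : 0 ≤ q) (hq1 : q < 1) : Multipliable fun k : ℕ => 1 - z * q ^ k := by
  simpa only [sub_eq_add_neg] using
    Real.multipliable_one_add_of_summable (summable_mul_pow hq0 hq1).neg

lemma tendsto_qp (hq0 : 0 ≤ q) (hq1 : q < 1) : Tendsto (qp z q) atTop (𝓝 (qpInf z q)) :=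
  (multipliable hq0 hq1).hasProd.tendsto_prod_nat

lemma qpInf_pos (hz0 : 0 ≤ z) (hz1 : z < 1) (hq0 : 0 ≤ q) (hq1 : q < 1) : 0 < qpInf z q := by
  have hlog : Summable fun k : ℕ => Real.log (1 - z * q ^ k) := by
    simpa only [sub_eq_add_neg] using
      Real.summable_log_one_add_of_summable (summable_mul_pow hq0 hq1).neg
  rw [qpInf, ← Real.rexp_tsum_eq_tprod (one_sub_mul_pow_pos hz0 hz1 hq0 hq1.le) hlog]
  exact Real.exp_pos _

lemma qpInf_le_qp (hz0 : 0 ≤ z) (hz1 : z < 1) (hq0 : 0 ≤ q) (hq1 : q < 1) (n : ℕ) :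
    qpInf z q ≤ qp z q n :=
  (qp_antitone hz0 hz1 hq0 hq1.le).le_of_tendsto (tendsto_qp hq0 hq1) n

lemma qpInf_antitone_left {w : ℝ} (hzw : z ≤ w) (hw1 : w ≤ 1) (hq0 : 0 ≤ q)
    (hq1 : q < 1) : qpInf w q ≤ qpInf z q :=
  le_of_tendsto_of_tendsto' (tendsto_qp hq0 hq1) (tendsto_qp hq0 hq1) fun n =>
    prod_le_prod (fun k _ => sub_nonneg.2 (mul_pow_le_one hw1 hq0 hq1.le k))
      fun k _ => by gcongr

lemma abs_qp_sub_le (hz0 : 0 ≤ z) (hz1 : z ≤ 1) (hq0 : 0 ≤ q) (hq1 : q ≤ 1) (n : ℕ) :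
    |qp z q n - (1 - z * ∑ k ∈ range n, q ^ k)| ≤ (z * ∑ k ∈ range n, q ^ k) ^ 2 := by
  induction n with
  | zero => simp [qp]
  | succ n ih =>
    obtain ⟨ih1, ih2⟩ := abs_le.1 ih
    have ha0 : 0 ≤ z * q ^ n := mul_nonneg hz0 (pow_nonneg hq0 n)
    have ha1 := mul_pow_le_one hz1 hq0 hq1 n
    have hS : 0 ≤ z * ∑ k ∈ range n, q ^ k :=
      mul_nonneg hz0 (sum_nonneg fun k _ => pow_nonneg hq0 k)
    rw [qp_succ, sum_range_succ, mul_add]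
    exact abs_le.2 ⟨by nlinarith, by nlinarith⟩

lemma abs_qpInf_sub_le (hz0 : 0 ≤ z) (hz1 : z ≤ 1) (hq0 : 0 ≤ q) (hq1 : q < 1) :
    |qpInf z q - (1 - z / (1 - q))| ≤ (z / (1 - q)) ^ 2 := by
  have hgeo : Tendsto (fun n => z * ∑ k ∈ range n, q ^ k) atTop (𝓝 (z / (1 - q))) := by
    simpa only [div_eq_mul_inv] using
      (hasSum_geometric_of_lt_one hq0 hq1).tendsto_sum_nat.const_mul z
  exact le_of_tendsto_of_tendsto' (((tendsto_qp hq0 hq1).sub (tendsto_const_nhds.sub hgeo)).abs)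
    (hgeo.pow 2) (abs_qp_sub_le hz0 hz1 hq0 hq1.le)

lemma tendsto_qpInf_mul_pow {c : ℝ} (hc0 : 0 ≤ c) (hc1 : c ≤ 1) (hq0 : 0 ≤ q)
    (hq1 : q < 1) :
    Tendsto (fun n : ℕ => qpInf (c * q ^ n) q) atTop (𝓝 1) := by
  have hs : Tendsto (fun n : ℕ => c * q ^ n / (1 - q)) atTop (𝓝 0) := by
    simpa using ((tendsto_pow_atTop_nhds_zero_of_lt_one hq0 hq1).const_mul c).div_const (1 - q)
  rw [tendsto_iff_norm_sub_tendsto_zero]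
  refine squeeze_zero (fun _ => norm_nonneg _) (fun n => ?_) (by simpa using hs.add (hs.pow 2))
  have hcq : 0 ≤ c * q ^ n := mul_nonneg hc0 (pow_nonneg hq0 n)
  obtain ⟨h1, h2⟩ := abs_le.1 (abs_qpInf_sub_le hcq
    (mul_pow_le_one hc1 hq0 hq1.le n) hq0 hq1)
  have : 0 ≤ c * q ^ n / (1 - q) := div_nonneg hcq (sub_nonneg.2 hq1.le)
  rw [Real.norm_eq_abs, abs_le]
  constructor <;> linarith

lemma qbinom_nonneg (hq0 : 0 ≤ q) (hq1 : q < 1) (n k : ℕ) : 0 ≤ qbinom q n k := by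
  have := qp_pos hq0 hq1 hq0 hq1.le
  exact div_nonneg (this n).le (mul_nonneg (this k).le (this (n - k)).le)

lemma qbinom_le (hq0 : 0 ≤ q) (hq1 : q < 1) (n k : ℕ) :
    qbinom q n k ≤ (qpInf q q ^ 2)⁻¹ := by
  have hinf := qpInf_pos hq0 hq1 hq0 hq1
  rw [qbinom, sq, ← one_div]
  exact div_le_div₀ zero_le_one (qp_le_one hq0 hq1.le hq0 hq1.le n) (by positivity)
    (mul_le_mul (qpInf_le_qp hq0 hq1 hq0 hq1 k) (qpInf_le_qp hq0 hq1 hq0 hq1 (n - k))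
      hinf.le (qp_pos hq0 hq1 hq0 hq1.le k).le)

lemma tendsto_qbinom (hq0 : 0 ≤ q) (hq1 : q < 1) (k : ℕ) :
    Tendsto (fun n => qbinom q n k) atTop (𝓝 (qp q q k)⁻¹) := by
  have hinf := qpInf_pos hq0 hq1 hq0 hq1
  have hk := qp_pos hq0 hq1 hq0 hq1.le k
  have h := (tendsto_qp (z := q) hq0 hq1).div
    (tendsto_const_nhds.mul ((tendsto_qp hq0 hq1).comp (tendsto_sub_atTop_nat k)))
    (mul_pos hk hinf).ne'
  rwa [div_mul_cancel_right₀ hinf.ne'] at h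

end QPochhammer

open QPochhammer

variable {p q : ℝ}

lemma tendsto_Δ_div_pow (hp0 : 0 ≤ p) (hp1 : p ≤ 1) (hq0 : 0 < q) (hq1 : q < 1) :
    Tendsto (fun n => Δ p q n / q ^ n) atTop (𝓝 ((1 - p) / (1 - q))) := by
  rw [tendsto_iff_norm_sub_tendsto_zero]
  refine squeeze_zero (fun _ => norm_nonneg _) (fun n => ?_) (by
    simpa using (tendsto_pow_atTop_nhds_zero_of_lt_one hq0.le hq1).const_mul
      ((p ^ 2 + 1) / (1 - q) ^ 2))
  have hqn : 0 < q ^ n := pow_pos hq0 n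
  have hpn := abs_qpInf_sub_le (mul_nonneg hp0 hqn.le)
    (mul_pow_le_one hp1 hq0.le hq1.le n) hq0.le hq1
  have hqn' := abs_qpInf_sub_le hqn.le (pow_le_one₀ hq0.le hq1.le) hq0.le hq1
  have hsplit : Δ p q n / q ^ n - (1 - p) / (1 - q) =
      ((qpInf (p * q ^ n) q - (1 - p * q ^ n / (1 - q))) -
        (qpInf (q ^ n) q - (1 - q ^ n / (1 - q)))) / q ^ n := by
    rw [Δ]
    field_simp
    ring
  rw [Real.norm_eq_abs, hsplit, abs_div, abs_of_pos hqn, div_le_iff₀ hqn]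
  calc _ ≤ |qpInf (p * q ^ n) q - (1 - p * q ^ n / (1 - q))| +
        |qpInf (q ^ n) q - (1 - q ^ n / (1 - q))| := abs_sub _ _
    _ ≤ (p * q ^ n / (1 - q)) ^ 2 + (q ^ n / (1 - q)) ^ 2 := add_le_add hpn hqn'
    _ = (p ^ 2 + 1) / (1 - q) ^ 2 * q ^ n * q ^ n := by field_simp

lemma neg_one_pow_mul_rpow_mul_Ct (hq0 : 0 < q) (n : ℕ) :
    (-1) ^ n * q ^ ((n : ℝ) / 2) * Ct p q n =
      q ^ (-(1 : ℝ) / 4) * Real.sqrt (qp p q (n + 1) / qp q q n) * qpInf (p * q ^ (n + 1)) q /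
        Real.sqrt (Δ p q n / q ^ n * (Δ p q (n + 1) / q ^ (n + 1))) := by
  have hqn : 0 < q ^ n * q ^ (n + 1) := by positivity
  have hsqrt : Real.sqrt (q ^ n * q ^ (n + 1)) = q ^ ((n : ℝ) + 1 / 2) := by
    rw [← pow_add, Real.sqrt_eq_rpow, ← Real.rpow_natCast, ← Real.rpow_mul hq0.le]
    push_cast
    ring_nf
  have hpow : q ^ ((n : ℝ) / 2) * q ^ ((n : ℝ) / 2 + 1 / 4) =
      q ^ (-(1 : ℝ) / 4) * q ^ ((n : ℝ) + 1 / 2) := by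
    rw [← Real.rpow_add hq0, ← Real.rpow_add hq0]
    ring_nf
  have hΔ : Δ p q n * Δ p q (n + 1) =
      Δ p q n / q ^ n * (Δ p q (n + 1) / q ^ (n + 1)) * (q ^ n * q ^ (n + 1)) := by
    field_simp
  -- `Real.sqrt_mul'` needs only the factor `q^n q^{n+1}` to be nonnegative, not `Δ`.
  rw [Ct, hΔ, Real.sqrt_mul' _ hqn.le, hsqrt]
  calc _ = ((-1) ^ n * (-1) ^ n) * (q ^ ((n : ℝ) / 2) * q ^ ((n : ℝ) / 2 + 1 / 4)) *
        Real.sqrt (qp p q (n + 1) / qp q q n) * qpInf (p * q ^ (n + 1)) q /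
        (Real.sqrt (Δ p q n / q ^ n * (Δ p q (n + 1) / q ^ (n + 1))) *
          q ^ ((n : ℝ) + 1 / 2)) := by ring
    _ = _ := by
      rw [← pow_add, ← two_mul, pow_mul, neg_one_sq, one_pow, one_mul, hpow]
      field_simp

lemma tendsto_neg_one_pow_mul_rpow_mul_Ct (hp0 : 0 ≤ p) (hp1 : p < 1) (hq0 : 0 < q)
    (hq1 : q < 1) :
    Tendsto (fun n : ℕ => (-1) ^ n * q ^ ((n : ℝ) / 2) * Ct p q n) atTop
      (𝓝 (q ^ (-(1 : ℝ) / 4) * ((1 - q) / (1 - p)) * Real.sqrt (qpInf p q / qpInf q q))) := by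
  have hL : 0 < (1 - p) / (1 - q) := div_pos (sub_pos.2 hp1) (sub_pos.2 hq1)
  have hu := tendsto_Δ_div_pow hp0 hp1.le hq0 hq1
  have hratio : Tendsto (fun n => qp p q (n + 1) / qp q q n) atTop
      (𝓝 (qpInf p q / qpInf q q)) :=
    ((tendsto_qp hq0.le hq1).comp (tendsto_add_atTop_nat 1)).div (tendsto_qp hq0.le hq1)
      (qpInf_pos hq0.le hq1 hq0.le hq1).ne'
  have htail : Tendsto (fun n => qpInf (p * q ^ (n + 1)) q) atTop (𝓝 1) :=
    (tendsto_qpInf_mul_pow hp0 hp1.le hq0.le hq1).comp (tendsto_add_atTop_nat 1)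
  have hlim := (((hratio.sqrt).const_mul (q ^ (-(1 : ℝ) / 4))).mul htail).div
    (hu.mul (hu.comp (tendsto_add_atTop_nat 1))).sqrt (Real.sqrt_pos.2 (mul_pos hL hL)).ne'
  have hval : q ^ (-(1 : ℝ) / 4) * ((1 - q) / (1 - p)) * Real.sqrt (qpInf p q / qpInf q q) =
      q ^ (-(1 : ℝ) / 4) * Real.sqrt (qpInf p q / qpInf q q) * 1 /
        Real.sqrt ((1 - p) / (1 - q) * ((1 - p) / (1 - q))) := by
    rw [Real.sqrt_mul_self hL.le]
    field_simp
  simp_rw [neg_one_pow_mul_rpow_mul_Ct hq0, hval]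
  exact hlim

noncomputable def btDivCt (p q : ℝ) (k n : ℕ) : ℝ :=
  (-1) ^ k * qbinom q n k * (q ^ ((k : ℝ) ^ 2 + (k : ℝ) / 2) / qp p q k) *
    (1 - (1 - q ^ k) / (1 - p * q ^ k) * (qpInf (q ^ (n + 1)) q / qpInf (p * q ^ (n + 1)) q))

lemma bt_eq_Ct_mul_btDivCt (p q : ℝ) (k n : ℕ) : bt p q k n = Ct p q n * btDivCt p q k n := by
  simp only [bt, btDivCt]
  ring

lemma one_sub_div_mul_qpInf_div_mem_Icc (hp0 : 0 ≤ p) (hp1 : p < 1) (hq0 : 0 ≤ q) (hq1 : q < 1)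
    (k n : ℕ) :
    1 - (1 - q ^ k) / (1 - p * q ^ k) * (qpInf (q ^ (n + 1)) q / qpInf (p * q ^ (n + 1)) q) ∈
      Set.Icc 0 1 := by
  have hqk : q ^ k ≤ 1 := pow_le_one₀ hq0 hq1.le
  have hpk := one_sub_mul_pow_pos hp0 hp1 hq0 hq1.le k
  have hqn : 0 ≤ q ^ (n + 1) := pow_nonneg hq0 _
  have hqn1 : q ^ (n + 1) < 1 := pow_lt_one₀ hq0 hq1 n.succ_ne_zero
  have hnum := qpInf_pos hqn hqn1 hq0 hq1
  have hden := qpInf_pos (mul_nonneg hp0 hqn) (mul_lt_one_of_nonneg_of_lt_one_left hp0 hp1 hqn1.le)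
    hq0 hq1
  have ha0 : 0 ≤ (1 - q ^ k) / (1 - p * q ^ k) := div_nonneg (sub_nonneg.2 hqk) hpk.le
  have ha1 : (1 - q ^ k) / (1 - p * q ^ k) ≤ 1 :=
    (div_le_one hpk).2 (by linarith [mul_le_of_le_one_left (pow_nonneg hq0 k) hp1.le])
  have hR0 : 0 ≤ qpInf (q ^ (n + 1)) q / qpInf (p * q ^ (n + 1)) q := div_nonneg hnum.le hden.le
  have hR1 : qpInf (q ^ (n + 1)) q / qpInf (p * q ^ (n + 1)) q ≤ 1 :=
    (div_le_one hden).2 (qpInf_antitone_left (mul_le_of_le_one_left hqn hp1.le) hqn1.le hq0 hq1)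
  exact ⟨sub_nonneg.2 (mul_le_one₀ ha1 hR0 hR1), sub_le_self _ (mul_nonneg ha0 hR0)⟩

lemma tendsto_btDivCt (hp0 : 0 ≤ p) (hp1 : p < 1) (hq0 : 0 ≤ q) (hq1 : q < 1) (k : ℕ) :
    Tendsto (fun n => btDivCt p q k n) atTop
      (𝓝 ((-q) ^ k * (q ^ ((k : ℝ) ^ 2 + (k : ℝ) / 2) / (qp (p * q) q k * qp q q k)))) := by
  have hR : Tendsto (fun n => qpInf (q ^ (n + 1)) q / qpInf (p * q ^ (n + 1)) q) atTop
      (𝓝 1) := by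
    have h := ((tendsto_qpInf_mul_pow zero_le_one le_rfl hq0 hq1).div
      (tendsto_qpInf_mul_pow hp0 hp1.le hq0 hq1) one_ne_zero).comp (tendsto_add_atTop_nat 1)
    simp only [one_mul, div_one] at h
    exact h
  have hval : (-q) ^ k * (q ^ ((k : ℝ) ^ 2 + (k : ℝ) / 2) / (qp (p * q) q k * qp q q k)) =
      (-1) ^ k * (qp q q k)⁻¹ * (q ^ ((k : ℝ) ^ 2 + (k : ℝ) / 2) / qp p q k) *
        (1 - (1 - q ^ k) / (1 - p * q ^ k) * 1) := by
    have hp : 1 - p ≠ 0 := (sub_pos.2 hp1).ne'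
    have hqp : qp (p * q) q k = qp p q k * (1 - p * q ^ k) / (1 - p) := by
      rw [eq_div_iff hp, mul_comm, ← qp_succ', qp_succ]
    have hpk : 1 - q ^ k * p ≠ 0 := by
      rw [mul_comm]
      exact (one_sub_mul_pow_pos hp0 hp1 hq0 hq1.le k).ne'
    rw [hqp, neg_pow]
    field_simp
    ring
  rw [hval]
  exact ((tendsto_const_nhds.mul (tendsto_qbinom hq0 hq1 k)).mul tendsto_const_nhds).mul
    (tendsto_const_nhds.sub (tendsto_const_nhds.mul hR))

lemma abs_btDivCt_le (hp0 : 0 ≤ p) (hp1 : p < 1) (hq0 : 0 ≤ q) (hq1 : q < 1) (k n : ℕ) :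
    |btDivCt p q k n| ≤ q ^ ((k : ℝ) ^ 2 + (k : ℝ) / 2) / (qpInf q q ^ 2 * qpInf p q) := by
  obtain ⟨hb0, hb1⟩ := one_sub_div_mul_qpInf_div_mem_Icc hp0 hp1 hq0 hq1 k n
  have hpk := qp_pos hp0 hp1 hq0 hq1.le k
  have hp := qpInf_pos hp0 hp1 hq0 hq1
  rw [btDivCt, abs_mul, abs_mul, abs_mul, abs_pow, abs_neg, abs_one, one_pow, one_mul,
    abs_of_nonneg (qbinom_nonneg hq0 hq1 n k), abs_of_nonneg (by positivity),
    abs_of_nonneg hb0]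
  calc _ ≤ (qpInf q q ^ 2)⁻¹ * (q ^ ((k : ℝ) ^ 2 + (k : ℝ) / 2) / qpInf p q) * 1 := by
        gcongr
        · exact qbinom_le hq0 hq1 n k
        · exact qpInf_le_qp hp0 hp1 hq0 hq1 k
    _ = _ := by field_simp

lemma summable_rpow_sq_add_half_mul_pow (hq0 : 0 < q) (hq1 : q < 1) (r : ℝ) :
    Summable fun k : ℕ => q ^ ((k : ℝ) ^ 2 + (k : ℝ) / 2) * r ^ k := by
  have hsq (k : ℕ) :
      q ^ ((k : ℝ) ^ 2 + (k : ℝ) / 2) * r ^ k = (q ^ ((k : ℝ) + 1 / 2) * r) ^ k := by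
    rw [mul_pow, ← Real.rpow_natCast (q ^ _), ← Real.rpow_mul hq0.le]
    ring_nf
  have hlim : Tendsto (fun k : ℕ => q ^ ((k : ℝ) + 1 / 2) * r) atTop (𝓝 0) := by
    simp_rw [Real.rpow_add hq0, Real.rpow_natCast]
    simpa using ((tendsto_pow_atTop_nhds_zero_of_lt_one hq0.le hq1).mul_const _).mul_const r
  refine summable_geometric_two.of_norm_bounded_eventually_nat ?_
  filter_upwards [(hlim.norm.eventually (gt_mem_nhds (by norm_num : ‖(0 : ℝ)‖ < 1 / 2)))]
    with k hk
  rw [hsq, norm_pow]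
  exact pow_le_pow_left₀ (norm_nonneg _) hk.le k

lemma tendsto_sum_btDivCt (hp0 : 0 ≤ p) (hp1 : p < 1) (hq0 : 0 < q) (hq1 : q < 1) (x : ℂ) :
    Tendsto (fun n => ∑ k ∈ range (n + 1), (btDivCt p q k n : ℂ) * x ^ k) atTop
      (𝓝 (∑' k : ℕ, ((q ^ ((k : ℝ) ^ 2 + (k : ℝ) / 2) : ℝ) : ℂ) /
          ((qp (p * q) q k * qp q q k : ℝ) : ℂ) * (-(q : ℂ) * x) ^ k)) := by
  set F : ℕ → ℕ → ℂ := fun n k => if k ≤ n then (btDivCt p q k n : ℂ) * x ^ k else 0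
  have hF (n : ℕ) : ∑ k ∈ range (n + 1), (btDivCt p q k n : ℂ) * x ^ k = ∑' k, F n k := by
    rw [tsum_eq_sum (s := range (n + 1)) fun k hk => if_neg (by simpa [Nat.lt_succ_iff] using hk)]
    exact sum_congr rfl fun k hk => (if_pos (Nat.lt_succ_iff.1 (mem_range.1 hk))).symm
  simp_rw [hF]
  refine tendsto_tsum_of_dominated_convergence
    ((summable_rpow_sq_add_half_mul_pow hq0 hq1 ‖x‖).mul_left (qpInf q q ^ 2 * qpInf p q)⁻¹)
    (fun k => ?_) (Eventually.of_forall fun n k => ?_)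
  · refine Tendsto.congr' (f₁ := fun n => (btDivCt p q k n : ℂ) * x ^ k) ?_ ?_
    · filter_upwards [eventually_ge_atTop k] with n hn
      exact (if_pos hn).symm
    · have hval : ((q ^ ((k : ℝ) ^ 2 + (k : ℝ) / 2) : ℝ) : ℂ) /
          ((qp (p * q) q k * qp q q k : ℝ) : ℂ) * (-(q : ℂ) * x) ^ k =
          (((-q) ^ k * (q ^ ((k : ℝ) ^ 2 + (k : ℝ) / 2) / (qp (p * q) q k * qp q q k)) : ℝ)
            : ℂ) * x ^ k := by
        push_cast
        ring
      rw [hval]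
      exact ((Complex.continuous_ofReal.tendsto _).comp
        (tendsto_btDivCt hp0 hp1 hq0.le hq1 k)).mul_const _
  · simp only [F]
    split_ifs
    · rw [norm_mul, norm_pow, Complex.norm_real, Real.norm_eq_abs, ← mul_assoc,
        ← div_eq_inv_mul]
      gcongr
      exact abs_btDivCt_le hp0 hp1 hq0.le hq1 k n
    · rw [norm_zero]
      have := qpInf_pos hp0 hp1 hq0.le hq1
      positivity

theorem stmt_19 (p q : ℝ) (hp0 : 0 ≤ p) (hp1 : p < 1) (hq0 : 0 < q) (hq1 : q < 1) (x : ℂ) :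
    Filter.Tendsto
      (fun n : ℕ => (-1 : ℂ) ^ n * ((q ^ ((n : ℝ) / 2) : ℝ) : ℂ) * Pt p q n x)
      Filter.atTop
      (nhds (((q ^ (-(1 : ℝ) / 4) * ((1 - q) / (1 - p)) *
          Real.sqrt (qpInf p q / qpInf q q) : ℝ) : ℂ) *
        ∑' k : ℕ, ((q ^ ((k : ℝ) ^ 2 + (k : ℝ) / 2) : ℝ) : ℂ) /
          ((qp (p * q) q k * qp q q k : ℝ) : ℂ) * (-(q : ℂ) * x) ^ k)) := by
  refine (((Complex.continuous_ofReal.tendsto _).comp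
    (tendsto_neg_one_pow_mul_rpow_mul_Ct hp0 hp1 hq0 hq1)).mul
      (tendsto_sum_btDivCt hp0 hp1 hq0 hq1 x)).congr fun n => ?_
  simp only [Function.comp_apply, Pt, mul_sum, bt_eq_Ct_mul_btDivCt]
  refine sum_congr rfl fun k _ => ?_
  push_cast
  ring
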